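/- Let G be a finite connected simple graph of order n ≥ 2 and let p < n be a positive integer. Then γ(M(G + K̄_p)) = p + min{ γ(M(G[A])) : A ⊆ V(G), |A| = n − p }, where G[A] denotes the subgraph of G induced on the vertex set A, G + K̄_p is the join of G with the edgeless graph on p vertices, and γ denotes the domination number. -/

import Mathlib

/-- `S` is a dominating set of the graph `H`. -/
def IsDomSet {V : Type*} (H : SimpleGraph V) (S : Set V) : Prop :=
  ∀ v : V, v ∈ S ∨ ∃ s ∈ S, H.Adj v s

/-- The domination number of a graph `H`. -/
noncomputable def domNum {V : Type*} (H : SimpleGraph V) : ℕ :=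
  sInf {k : ℕ | ∃ S : Set V, IsDomSet H S ∧ S.ncard = k}

/-- The middle graph `M(G)` of a graph `G`: its vertices are the vertices and edges
of `G`; a vertex is adjacent to the edges incident to it, and two edges are adjacent
iff they are distinct and share an endpoint. -/
def middleGraph {V : Type*} (G : SimpleGraph V) : SimpleGraph (V ⊕ G.edgeSet) where
  Adj x y :=
    match x, y with
    | Sum.inl _, Sum.inl _ => False
    | Sum.inl v, Sum.inr e => v ∈ (e : Sym2 V)
    | Sum.inr e, Sum.inl v => v ∈ (e : Sym2 V)
    | Sum.inr e, Sum.inr f => e ≠ f ∧ ∃ v, v ∈ (e : Sym2 V) ∧ v ∈ (f : Sym2 V)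
  symm := by
    constructor
    rintro (v | e) (w | f) h
    · exact h.elim
    · exact h
    · exact h
    · exact ⟨Ne.symm h.1, h.2.imp fun v hv => ⟨hv.2, hv.1⟩⟩
  loopless := by
    constructor
    rintro (v | e) h
    · exact h.elim
    · exact h.1 rfl

/-- The join `G + H` of two graphs. -/
def graphJoin {V W : Type*} (G : SimpleGraph V) (H : SimpleGraph W) :
    SimpleGraph (V ⊕ W) where
  Adj x y :=
    match x, y with
    | Sum.inl a, Sum.inl b => G.Adj a b
    | Sum.inl _, Sum.inr _ => True
    | Sum.inr _, Sum.inl _ => True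
    | Sum.inr a, Sum.inr b => H.Adj a b
  symm := by
    constructor
    rintro (a | a) (b | b) h
    · exact G.adj_symm h
    · trivial
    · trivial
    · exact H.adj_symm h
  loopless := by
    constructor
    rintro (a | a) h
    · exact G.irrefl h
    · exact H.irrefl h

/-!
Write `J = G + K̄_p`. For the upper bound take `A` with `|A| = n - p`, a minimum dominating set
of `M(G[A])`, and the `p` edges of a perfect matching between `V ∖ A` and `K̄_p`.

For the lower bound, a dominating set `D` of `M(H)` can be pulled back along an induced embedding
`K ↪ H` to a dominating set of `M(K)`, paying only with the elements of `D` that meet `K`: an edge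
of `H` that is not an edge of `K` has at most one end in `K`, and is traded for that end. So it
suffices to find `C ⊆ V` with `|C| = p` such that at least `p` elements of `D` avoid `V ∖ C`. Let
`B` be the set of vertices of `G` joined to `K̄_p` by an edge of `D`. If `|B| ≤ p`, take `C ⊇ B`:
the elements of `D` dominating the `p` vertices of `K̄_p` are distinct and avoid `V ∖ C`.
Otherwise take `C ⊆ B` and count, for each `c ∈ C`, an edge of `D` from `c` to `K̄_p`.
-/

open Sum Set SimpleGraph

theorem Set.ncard_le_ncard_of_forall_subsingleton {α β : Type*} {s : Set α} {t : Set β}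
    (r : α → β → Prop) (hs : s.Finite) (ht : t.Finite) (hst : ∀ a ∈ s, ∃ b ∈ t, r a b)
    (hts : ∀ b ∈ t, {a ∈ s | r a b}.Subsingleton) : s.ncard ≤ t.ncard := by
  rw [ncard_eq_toFinset_card s hs, ncard_eq_toFinset_card t ht]
  exact Finset.card_le_card_of_forall_subsingleton r (by simpa using hst) (by simpa using hts)

section Domination

variable {W W' : Type*} {M : SimpleGraph W} {N : SimpleGraph W'}

theorem domNum_le_ncard {S : Set W} (hS : IsDomSet M S) : domNum M ≤ S.ncard :=
  Nat.sInf_le ⟨S, hS, rfl⟩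

theorem exists_isDomSet_ncard_eq_domNum (M : SimpleGraph W) :
    ∃ S, IsDomSet M S ∧ S.ncard = domNum M :=
  Nat.sInf_mem (s := {k | ∃ S, IsDomSet M S ∧ S.ncard = k})
    ⟨_, univ, fun _ => Or.inl trivial, rfl⟩

theorem IsDomSet.image_union {S : Set W} {F : Set W'} (ψ : M →g N) (hS : IsDomSet M S)
    (hF : ∀ y ∉ range ψ, y ∈ F ∨ ∃ f ∈ F, N.Adj y f) : IsDomSet N (ψ '' S ∪ F) := by
  intro y
  by_cases hy : y ∈ range ψ
  · obtain ⟨x, rfl⟩ := hy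
    rcases hS x with hx | ⟨s, hs, hxs⟩
    · exact Or.inl (Or.inl (mem_image_of_mem ψ hx))
    · exact Or.inr ⟨ψ s, Or.inl (mem_image_of_mem ψ hs), ψ.map_adj hxs⟩
  · rcases hF y hy with hyF | ⟨f, hf, hyf⟩
    · exact Or.inl (Or.inr hyF)
    · exact Or.inr ⟨f, Or.inr hf, hyf⟩

theorem domNum_le_domNum_add_ncard [Finite W] (ψ : M →g N) {F : Set W'}
    (hF : ∀ y ∉ range ψ, y ∈ F ∨ ∃ f ∈ F, N.Adj y f) : domNum N ≤ domNum M + F.ncard := by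
  obtain ⟨S, hS, hScard⟩ := exists_isDomSet_ncard_eq_domNum M
  calc domNum N ≤ (ψ '' S ∪ F).ncard := domNum_le_ncard (hS.image_union ψ hF)
    _ ≤ (ψ '' S).ncard + F.ncard := ncard_union_le _ _
    _ ≤ domNum M + F.ncard := by rw [← hScard]; gcongr; exact ncard_image_le

end Domination

section MiddleGraph

variable {U U' : Type*} {K : SimpleGraph U} {H : SimpleGraph U'}

def middleSupport (H : SimpleGraph U') : U' ⊕ H.edgeSet → Set U'
  | inl v => {v}
  | inr e => {v | v ∈ (e : Sym2 U')}

theorem IsDomSet.exists_mem_middleSupport {D : Set (U' ⊕ H.edgeSet)}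
    (hD : IsDomSet (middleGraph H) D) (v : U') : ∃ d ∈ D, v ∈ middleSupport H d := by
  rcases hD (inl v) with hv | ⟨d, hd, hvd⟩
  · exact ⟨inl v, hv, rfl⟩
  · rcases d with w | e
    · exact hvd.elim
    · exact ⟨inr e, hd, hvd⟩

theorem exists_mem_middleSupport_of_adj_inr {e : H.edgeSet} {d : U' ⊕ H.edgeSet}
    (h : (middleGraph H).Adj (inr e) d) : ∃ v ∈ (e : Sym2 U'), v ∈ middleSupport H d := by
  rcases d with w | f
  · exact ⟨w, h, rfl⟩
  · exact h.2

theorem SimpleGraph.Embedding.apply_mem_sym2Map_iff (φ : K ↪g H) {u : U} {e : Sym2 U} :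
    φ u ∈ Sym2.map φ e ↔ u ∈ e := by
  simp [Sym2.mem_map, φ.injective.eq_iff]

theorem SimpleGraph.Embedding.mem_range_mapEdgeSet (φ : K ↪g H) {f : H.edgeSet} {u u' : U}
    (hne : u ≠ u') (hu : φ u ∈ (f : Sym2 U')) (hu' : φ u' ∈ (f : Sym2 U')) :
    f ∈ range φ.mapEdgeSet := by
  have hfuu' : (f : Sym2 U') = s(φ u, φ u') :=
    (Sym2.mem_and_mem_iff (φ.injective.ne hne)).1 ⟨hu, hu'⟩
  have hadj : K.Adj u u' := φ.map_adj_iff.1 (by simpa [hfuu'] using f.2)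
  exact ⟨⟨s(u, u'), hadj⟩, Subtype.ext (by simp [hfuu'])⟩

theorem SimpleGraph.Embedding.eq_of_apply_mem_of_notMem_range (φ : K ↪g H) {f : H.edgeSet}
    (hf : f ∉ range φ.mapEdgeSet) {u u' : U} (hu : φ u ∈ (f : Sym2 U'))
    (hu' : φ u' ∈ (f : Sym2 U')) : u = u' :=
  by_contra fun hne => hf (φ.mem_range_mapEdgeSet hne hu hu')

def middleGraphMap (φ : K ↪g H) : middleGraph K →g middleGraph H where
  toFun := Sum.map φ φ.mapEdgeSet
  map_rel' := by
    rintro (u | e) (u' | e') h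
    · exact h.elim
    · exact φ.apply_mem_sym2Map_iff.2 h
    · exact φ.apply_mem_sym2Map_iff.2 h
    · obtain ⟨hne, u, hue, hue'⟩ := h
      exact ⟨φ.mapEdgeSet.injective.ne hne, φ u, φ.apply_mem_sym2Map_iff.2 hue,
        φ.apply_mem_sym2Map_iff.2 hue'⟩

theorem mem_range_middleGraphMap_of_middleSupport_subset (φ : K ↪g H) {y : U' ⊕ H.edgeSet}
    (hy : middleSupport H y ⊆ range φ) : y ∈ range (middleGraphMap φ) := by
  rcases y with v | ⟨f, hf⟩
  · obtain ⟨u, rfl⟩ := hy rfl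
    exact ⟨inl u, rfl⟩
  · induction f using Sym2.ind with
    | _ x x' =>
      obtain ⟨u, rfl⟩ := hy (Sym2.mem_mk_left x x')
      obtain ⟨u', rfl⟩ := hy (Sym2.mem_mk_right _ x')
      obtain ⟨e, he⟩ := φ.mem_range_mapEdgeSet (f := ⟨_, hf⟩)
        (fun h => H.irrefl (h ▸ hf)) (Sym2.mem_mk_left _ _) (Sym2.mem_mk_right _ _)
      exact ⟨inr e, congrArg inr he⟩

theorem eq_inr_or_adj_inr_of_mem_middleSupport {v : U'} {y : U' ⊕ H.edgeSet} {f : H.edgeSet}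
    (hvy : v ∈ middleSupport H y) (hvf : v ∈ (f : Sym2 U')) :
    y = inr f ∨ (middleGraph H).Adj y (inr f) := by
  rcases y with v' | e
  · exact Or.inr (hvy ▸ hvf)
  · by_cases hef : e = f
    · exact Or.inl (congrArg inr hef)
    · exact Or.inr ⟨hef, v, hvy, hvf⟩

/-- `middlePullback φ x d`: the vertex `d` of `M(H)` is traded for the vertex `x` of `M(K)`. -/
def middlePullback (φ : K ↪g H) : U ⊕ K.edgeSet → U' ⊕ H.edgeSet → Prop
  | inl u, inl v => φ u = v
  | inl u, inr f => φ u ∈ (f : Sym2 U') ∧ f ∉ range φ.mapEdgeSet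
  | inr e, inr f => φ.mapEdgeSet e = f
  | inr _, inl _ => False

theorem middlePullback_or_of_apply_mem_middleSupport (φ : K ↪g H) {u : U} {d : U' ⊕ H.edgeSet}
    (hu : φ u ∈ middleSupport H d) :
    middlePullback φ (inl u) d ∨ ∃ e : K.edgeSet, d = inr (φ.mapEdgeSet e) ∧ u ∈ (e : Sym2 U) := by
  rcases d with v | f
  · exact Or.inl hu
  · by_cases hf : f ∈ range φ.mapEdgeSet
    · obtain ⟨e, rfl⟩ := hf
      exact Or.inr ⟨e, rfl, φ.apply_mem_sym2Map_iff.1 hu⟩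
    · exact Or.inl ⟨hu, hf⟩

theorem middlePullback_unique (φ : K ↪g H) {x x' : U ⊕ K.edgeSet} {d : U' ⊕ H.edgeSet}
    (hx : middlePullback φ x d) (hx' : middlePullback φ x' d) : x = x' := by
  rcases x with u | e <;> rcases x' with u' | e' <;> rcases d with v | f
  · exact congrArg inl (φ.injective (hx.trans hx'.symm))
  · exact congrArg inl (φ.eq_of_apply_mem_of_notMem_range hx.2 hx.1 hx'.1)
  · exact hx'.elim
  · exact (hx.2 ⟨e', hx'⟩).elim
  · exact hx.elim
  · exact (hx'.2 ⟨e, hx⟩).elim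
  · exact hx.elim
  · exact congrArg inr (φ.mapEdgeSet.injective (hx.trans hx'.symm))

theorem not_disjoint_middleSupport_of_middlePullback (φ : K ↪g H) {x : U ⊕ K.edgeSet}
    {d : U' ⊕ H.edgeSet} (hx : middlePullback φ x d) :
    ¬ Disjoint (middleSupport H d) (range φ) := by
  rcases x with u | ⟨e, he⟩ <;> rcases d with v | f
  · exact Set.not_disjoint_iff.2 ⟨v, rfl, u, hx⟩
  · exact Set.not_disjoint_iff.2 ⟨φ u, hx.1, u, rfl⟩
  · exact hx.elim
  · subst hx
    induction e using Sym2.ind with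
    | _ a b => exact Set.not_disjoint_iff.2 ⟨φ a, by simp [middleSupport], a, rfl⟩

theorem IsDomSet.middlePullback (φ : K ↪g H) {D : Set (U' ⊕ H.edgeSet)}
    (hD : IsDomSet (middleGraph H) D) :
    IsDomSet (middleGraph K) {x | ∃ d ∈ D, middlePullback φ x d} := by
  rintro (u | e)
  · obtain ⟨d, hd, hud⟩ := hD.exists_mem_middleSupport (φ u)
    rcases middlePullback_or_of_apply_mem_middleSupport φ hud with hpull | ⟨e, rfl, hue⟩
    · exact Or.inl ⟨d, hd, hpull⟩
    · exact Or.inr ⟨inr e, ⟨_, hd, rfl⟩, hue⟩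
  · rcases hD (inr (φ.mapEdgeSet e)) with he | ⟨d, hd, hed⟩
    · exact Or.inl ⟨_, he, rfl⟩
    obtain ⟨v, hve, hvd⟩ := exists_mem_middleSupport_of_adj_inr hed
    obtain ⟨u, hue, rfl⟩ := Sym2.mem_map.1 hve
    rcases middlePullback_or_of_apply_mem_middleSupport φ hvd with hpull | ⟨e', rfl, hue'⟩
    · exact Or.inr ⟨inl u, ⟨d, hd, hpull⟩, hue⟩
    · refine Or.inr ⟨inr e', ⟨_, hd, rfl⟩, fun hee' => ?_, u, hue, hue'⟩
      subst hee'
      exact (middleGraph H).irrefl hed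

theorem domNum_middleGraph_add_ncard_le [Finite U'] (φ : K ↪g H) {D : Set (U' ⊕ H.edgeSet)}
    (hD : IsDomSet (middleGraph H) D) :
    domNum (middleGraph K) + {d ∈ D | Disjoint (middleSupport H d) (range φ)}.ncard
      ≤ D.ncard := by
  have : Finite U := Finite.of_injective φ φ.injective
  have hmeet :
      domNum (middleGraph K) ≤ {d ∈ D | ¬ Disjoint (middleSupport H d) (range φ)}.ncard :=
    (domNum_le_ncard (hD.middlePullback φ)).trans <|
      ncard_le_ncard_of_forall_subsingleton (fun x d => middlePullback φ x d) (toFinite _)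
        (toFinite _)
        (fun _ ⟨d, hd, hxd⟩ => ⟨d, ⟨hd, not_disjoint_middleSupport_of_middlePullback φ hxd⟩, hxd⟩)
        (fun _ _ _ hx _ hx' => middlePullback_unique φ hx.2 hx'.2)
  have hsplit := ncard_inter_add_ncard_sdiff_eq_ncard D
    {d | ¬ Disjoint (middleSupport H d) (range φ)}
  have hmiss : D \ {d | ¬ Disjoint (middleSupport H d) (range φ)} =
      {d ∈ D | Disjoint (middleSupport H d) (range φ)} := by
    ext; simp
  rw [hmiss] at hsplit
  exact (Nat.add_le_add_right hmeet _).trans hsplit.le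

end MiddleGraph

section Join

variable {V W : Type*} (G : SimpleGraph V)

def graphJoinInl (H : SimpleGraph W) : G ↪g graphJoin G H where
  toFun := inl
  inj' := inl_injective
  map_rel_iff' := Iff.rfl

def graphJoinEdge (H : SimpleGraph W) (v : V) (w : W) : (graphJoin G H).edgeSet :=
  ⟨s(inl v, inr w), trivial⟩

theorem graphJoinEdge_inj (H : SimpleGraph W) {v v' : V} {w w' : W} :
    graphJoinEdge G H v w = graphJoinEdge G H v' w' ↔ v = v' ∧ w = w' := by
  simp [graphJoinEdge, Subtype.ext_iff]

@[simp]
theorem middleSupport_inr_graphJoinEdge (H : SimpleGraph W) (v : V) (w : W) :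
    middleSupport (graphJoin G H) (inr (graphJoinEdge G H v w)) = {inl v, inr w} := by
  ext; simp [middleSupport, graphJoinEdge]

theorem graphJoin_bot_edge_cases (f : (graphJoin G (⊥ : SimpleGraph W)).edgeSet) :
    (∃ a b, G.Adj a b ∧ (f : Sym2 (V ⊕ W)) = s(inl a, inl b)) ∨
      ∃ v w, f = graphJoinEdge G ⊥ v w := by
  obtain ⟨f, hf⟩ := f
  induction f using Sym2.ind with
  | _ x y =>
    rcases x with a | w <;> rcases y with b | w'
    · exact Or.inl ⟨a, b, hf, rfl⟩
    · exact Or.inr ⟨a, w', rfl⟩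
    · exact Or.inr ⟨b, w, Subtype.ext Sym2.eq_swap⟩
    · exact hf.elim

theorem eq_graphJoinEdge_of_inr_mem {f : (graphJoin G (⊥ : SimpleGraph W)).edgeSet} {w : W}
    (hw : inr w ∈ (f : Sym2 (V ⊕ W))) : ∃ v, f = graphJoinEdge G ⊥ v w := by
  rcases graphJoin_bot_edge_cases G f with ⟨a, b, -, hf⟩ | ⟨v, w', rfl⟩
  · simp [hf] at hw
  · simp only [graphJoinEdge, Sym2.mem_iff, reduceCtorEq, inr.injEq, false_or] at hw
    exact ⟨v, hw ▸ rfl⟩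

theorem eq_of_inr_mem_middleSupport {d : (V ⊕ W) ⊕ (graphJoin G (⊥ : SimpleGraph W)).edgeSet}
    {w w' : W} (hw : inr w ∈ middleSupport _ d) (hw' : inr w' ∈ middleSupport _ d) : w = w' := by
  rcases d with x | f
  · exact inr_injective (hw.trans hw'.symm)
  · obtain ⟨v, rfl⟩ := eq_graphJoinEdge_of_inr_mem G hw
    simpa [eq_comm] using hw'

theorem range_graphJoinInl_comp_induce (H : SimpleGraph W) (A : Set V) :
    range ((graphJoinInl G H).comp (Embedding.induce A)) = inl '' A := by
  ext; simp [graphJoinInl]; rfl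

theorem domNum_middleGraph_graphJoin_bot_le [Finite V] (A : Set V) {σ : ↥Aᶜ → W}
    (hσ : Function.Surjective σ) :
    domNum (middleGraph (graphJoin G (⊥ : SimpleGraph W))) ≤
      domNum (middleGraph (G.induce A)) + Aᶜ.ncard := by
  let φ := (graphJoinInl G (⊥ : SimpleGraph W)).comp (Embedding.induce A)
  let g : ↥Aᶜ → (V ⊕ W) ⊕ (graphJoin G ⊥).edgeSet := fun c => inr (graphJoinEdge G ⊥ c (σ c))
  refine (domNum_le_domNum_add_ncard (middleGraphMap φ) (F := range g) ?_).trans ?_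
  · intro y hy
    obtain ⟨v, hvy, hvA⟩ := not_subset.1
      (mt (mem_range_middleGraphMap_of_middleSupport_subset φ) hy)
    obtain ⟨c, hvc⟩ : ∃ c : ↥Aᶜ, v ∈ middleSupport _ (g c) := by
      rcases v with a | w
      · refine ⟨⟨a, fun ha => hvA ?_⟩, by simp [g]⟩
        rw [range_graphJoinInl_comp_induce]
        exact mem_image_of_mem inl ha
      · obtain ⟨c, rfl⟩ := hσ w
        exact ⟨c, by simp [g]⟩
    rcases eq_inr_or_adj_inr_of_mem_middleSupport hvy hvc with rfl | hadj
    · exact Or.inl ⟨c, rfl⟩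
    · exact Or.inr ⟨g c, ⟨c, rfl⟩, hadj⟩
  · gcongr
    calc (range g).ncard ≤ (univ : Set ↥Aᶜ).ncard := by
          rw [← image_univ]; exact ncard_image_le (toFinite _)
      _ = Aᶜ.ncard := by rw [ncard_univ, Nat.card_coe_set_eq]

theorem exists_ncard_eq_le_ncard_disjoint_middleSupport [Finite V] [Finite W]
    {D : Set ((V ⊕ W) ⊕ (graphJoin G (⊥ : SimpleGraph W)).edgeSet)}
    (hD : IsDomSet (middleGraph (graphJoin G ⊥)) D) (hWV : Nat.card W ≤ Nat.card V) :
    ∃ C : Set V, C.ncard = Nat.card W ∧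
      Nat.card W ≤ {d ∈ D | Disjoint (middleSupport _ d) (inl '' Cᶜ)}.ncard := by
  set B : Set V := {v | ∃ w, inr (graphJoinEdge G ⊥ v w) ∈ D}
  obtain ⟨C, hC, hBC | hCB⟩ : ∃ C : Set V, C.ncard = Nat.card W ∧ (B ⊆ C ∨ C ⊆ B) := by
    rcases le_total B.ncard (Nat.card W) with hB | hB
    · obtain ⟨C, hBC, -, hC⟩ :=
        exists_subsuperset_card_eq (subset_univ B) hB (by rwa [ncard_univ])
      exact ⟨C, hC, Or.inl hBC⟩
    · obtain ⟨C, hCB, hC⟩ := exists_subset_card_eq hB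
      exact ⟨C, hC, Or.inr hCB⟩
  · refine ⟨C, hC, ?_⟩
    rw [← ncard_univ]
    refine ncard_le_ncard_of_forall_subsingleton (fun w d => inr w ∈ middleSupport _ d)
      (toFinite _) (toFinite _) (fun w _ => ?_)
      (fun _ _ _ hw _ hw' => eq_of_inr_mem_middleSupport G hw.2 hw'.2)
    obtain ⟨d, hd, hwd⟩ := hD.exists_mem_middleSupport (inr w)
    refine ⟨d, ⟨hd, ?_⟩, hwd⟩
    rcases d with x | f
    · obtain rfl : inr w = x := hwd
      simp [middleSupport]
    · obtain ⟨v, rfl⟩ := eq_graphJoinEdge_of_inr_mem G hwd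
      have hvC : v ∈ C := hBC ⟨w, hd⟩
      simp [hvC]
  · refine ⟨C, hC, ?_⟩
    rw [← hC]
    refine ncard_le_ncard_of_forall_subsingleton
      (fun c d => ∃ w, d = inr (graphJoinEdge G ⊥ c w)) (toFinite _) (toFinite _)
      (fun c hc => ?_) (fun _ _ _ ⟨_, w, hw⟩ _ ⟨_, w', hw'⟩ => ?_)
    · obtain ⟨w, hw⟩ := hCB hc
      exact ⟨_, ⟨hw, by simp [hc]⟩, w, rfl⟩
    · subst hw
      exact ((graphJoinEdge_inj G ⊥).1 (inr_injective hw')).1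

theorem exists_ncard_eq_domNum_middleGraph_induce_add_le [Finite V] [Finite W]
    (hWV : Nat.card W ≤ Nat.card V) :
    ∃ A : Set V, A.ncard = Nat.card V - Nat.card W ∧
      domNum (middleGraph (G.induce A)) + Nat.card W ≤
        domNum (middleGraph (graphJoin G (⊥ : SimpleGraph W))) := by
  obtain ⟨D, hD, hDcard⟩ :=
    exists_isDomSet_ncard_eq_domNum (middleGraph (graphJoin G (⊥ : SimpleGraph W)))
  obtain ⟨C, hC, hCD⟩ := exists_ncard_eq_le_ncard_disjoint_middleSupport G hD hWV
  have hle :=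
    domNum_middleGraph_add_ncard_le ((graphJoinInl G ⊥).comp (Embedding.induce Cᶜ)) hD
  rw [range_graphJoinInl_comp_induce] at hle
  refine ⟨Cᶜ, ?_, by omega⟩
  have := ncard_add_ncard_compl C
  omega

end Join

theorem domNum_middle_join_small_eq_general {V : Type*} [Fintype V] (G : SimpleGraph V) (n p : ℕ)
    (hord : Fintype.card V = n) (hp : p < n) :
    domNum (middleGraph (graphJoin G (⊥ : SimpleGraph (Fin p)))) =
      p + sInf {k : ℕ | ∃ A : Set V, A.ncard = n - p ∧
        domNum (middleGraph (G.induce A)) = k} := by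
  have hV : Nat.card V = n := by rw [Nat.card_eq_fintype_card, hord]
  set S := {k : ℕ | ∃ A : Set V, A.ncard = n - p ∧ domNum (middleGraph (G.induce A)) = k}
  apply le_antisymm
  · obtain ⟨A₀, -, hA₀⟩ := exists_subset_card_eq (s := (univ : Set V)) (n := n - p)
      (by rw [ncard_univ, hV]; omega)
    obtain ⟨A, hA, hAS⟩ : sInf S ∈ S := Nat.sInf_mem ⟨_, A₀, hA₀, rfl⟩
    have hAc : Aᶜ.ncard = p := by
      have := ncard_add_ncard_compl A
      omega
    let σ : ↥Aᶜ ≃ Fin p := Finite.equivFinOfCardEq (by rw [Nat.card_coe_set_eq, hAc])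
    calc _ ≤ domNum (middleGraph (G.induce A)) + Aᶜ.ncard :=
          domNum_middleGraph_graphJoin_bot_le G A σ.surjective
      _ = p + sInf S := by rw [hAS, hAc, add_comm]
  · obtain ⟨A, hA, hle⟩ := exists_ncard_eq_domNum_middleGraph_induce_add_le G (W := Fin p)
      (by rw [hV, Nat.card_fin]; omega)
    rw [hV, Nat.card_fin] at hA
    rw [Nat.card_fin] at hle
    have hSA : sInf S ≤ domNum (middleGraph (G.induce A)) := Nat.sInf_le ⟨A, hA, rfl⟩
    omega

/-- For a connected graph `G` of order `n ≥ 2` and `0 < p < n`,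
`γ(M(G + K̄_p)) = p + min{γ(M(G[A])) : A ⊆ V(G), |A| = n - p}`. -/
theorem domNum_middle_join_small_eq {V : Type*} [Fintype V] (G : SimpleGraph V) (n p : ℕ)
    (hord : Fintype.card V = n) (hn : 2 ≤ n) (hconn : G.Connected)
    (hp0 : 0 < p) (hp : p < n) :
    domNum (middleGraph (graphJoin G (⊥ : SimpleGraph (Fin p)))) =
      p + sInf {k : ℕ | ∃ A : Set V, A.ncard = n - p ∧
        domNum (middleGraph (G.induce A)) = k} :=
  domNum_middle_join_small_eq_general G n p hord hp
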